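/- Let X1, X2, X3 be mutually independent finite random variables and Z another finite random variable. Then the set function S ↦ I(X_S; Z) on subsets S of {1,2,3} is supermodular: for all S, T ⊆ {1,2,3}, I(X_{S∪T}; Z) + I(X_{S∩T}; Z) ≥ I(X_S; Z) + I(X_T; Z). -/
import Mathlib

open Finset

noncomputable def rvDist {Ω : Type*} [Fintype Ω] {A : Type*} [Fintype A] [DecidableEq A]
    (p : Ω → ℝ) (X : Ω → A) (a : A) : ℝ :=
  ∑ ω, if X ω = a then p ω else 0

noncomputable def rvEnt {Ω : Type*} [Fintype Ω] {A : Type*} [Fintype A] [DecidableEq A]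
    (p : Ω → ℝ) (X : Ω → A) : ℝ :=
  ∑ a, Real.negMulLog (rvDist p X a)

/-- Mutual information `I(X; Y)`. -/
noncomputable def rvMI {Ω : Type*} [Fintype Ω] {A B : Type*} [Fintype A] [DecidableEq A]
    [Fintype B] [DecidableEq B] (p : Ω → ℝ) (X : Ω → A) (Y : Ω → B) : ℝ :=
  rvEnt p X + rvEnt p Y - rvEnt p (fun ω => (X ω, Y ω))

/-- Conditional mutual information `I(X; Y | Z)`. -/
noncomputable def rvCMI {Ω : Type*} [Fintype Ω] {A B C : Type*} [Fintype A] [DecidableEq A]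
    [Fintype B] [DecidableEq B] [Fintype C] [DecidableEq C]
    (p : Ω → ℝ) (X : Ω → A) (Y : Ω → B) (Z : Ω → C) : ℝ :=
  rvEnt p (fun ω => (X ω, Z ω)) + rvEnt p (fun ω => (Y ω, Z ω))
    - rvEnt p (fun ω => (X ω, Y ω, Z ω)) - rvEnt p Z

/-- The tuple of random variables `(X i : i ∈ S)`. -/
noncomputable def tup {Ω A : Type*} (X : Fin 3 → Ω → A) (S : Finset (Fin 3)) :
    Ω → (S → A) := fun ω i => X i.1 ω

section basic

variable {Ω : Type*} [Fintype Ω] {A B : Type*} [Fintype A] [DecidableEq A]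
  [Fintype B] [DecidableEq B] (p : Ω → ℝ)

lemma rvDist_nonneg (hp : ∀ ω, 0 ≤ p ω) (X : Ω → A) (a : A) : 0 ≤ rvDist p X a :=
  Finset.sum_nonneg fun ω _ => by split <;> simp [hp ω]

lemma sum_rvDist (X : Ω → A) : ∑ a, rvDist p X a = ∑ ω, p ω := by
  unfold rvDist
  rw [Finset.sum_comm]
  exact Finset.sum_congr rfl fun ω _ => by simp

lemma rvEnt_comp_inj (X : Ω → A) (F : A → B) (hF : Function.Injective F) :
    rvEnt p (fun ω => F (X ω)) = rvEnt p X := by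
  unfold rvEnt
  rw [← Finset.sum_subset (Finset.subset_univ (Finset.univ.image F))]
  · rw [Finset.sum_image (fun a _ b _ h => hF h)]
    refine Finset.sum_congr rfl fun a _ => ?_
    congr 1
    unfold rvDist
    exact Finset.sum_congr rfl fun ω _ => by simp [hF.eq_iff]
  · intro b _ hb
    have h0 : rvDist p (fun ω => F (X ω)) b = 0 := by
      refine Finset.sum_eq_zero fun ω _ => ?_
      have : F (X ω) ≠ b := fun h => hb (Finset.mem_image.2 ⟨X ω, Finset.mem_univ _, h⟩)
      simp [this]
    simp [h0]


lemma rvEnt_comp_inj' (X : Ω → A) (F : A → B) (hF : Function.Injective F)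
    (G : Ω → B) (hG : ∀ ω, G ω = F (X ω)) :
    rvEnt p G = rvEnt p X := by
  rw [show G = fun ω => F (X ω) from funext hG]
  exact rvEnt_comp_inj p X F hF

lemma rvEnt_pair_indep (hsum : ∑ ω, p ω = 1) (X : Ω → A) (Y : Ω → B)
    (h : ∀ a b, rvDist p (fun ω => (X ω, Y ω)) (a, b) = rvDist p X a * rvDist p Y b) :
    rvEnt p (fun ω => (X ω, Y ω)) = rvEnt p X + rvEnt p Y := by
  have h1 : ∑ a, rvDist p X a = 1 := by rw [sum_rvDist, hsum]
  have h2 : ∑ b, rvDist p Y b = 1 := by rw [sum_rvDist, hsum]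
  unfold rvEnt
  rw [Fintype.sum_prod_type]
  have key : ∀ a : A, ∑ b, Real.negMulLog (rvDist p (fun ω => (X ω, Y ω)) (a, b))
      = Real.negMulLog (rvDist p X a) + rvDist p X a * ∑ b, Real.negMulLog (rvDist p Y b) := by
    intro a
    calc ∑ b, Real.negMulLog (rvDist p (fun ω => (X ω, Y ω)) (a, b))
        = ∑ b, (rvDist p Y b * Real.negMulLog (rvDist p X a)
            + rvDist p X a * Real.negMulLog (rvDist p Y b)) := by
          refine Finset.sum_congr rfl fun b _ => ?_
          rw [h a b, Real.negMulLog_mul]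
      _ = (∑ b, rvDist p Y b) * Real.negMulLog (rvDist p X a)
            + rvDist p X a * ∑ b, Real.negMulLog (rvDist p Y b) := by
          rw [Finset.sum_add_distrib, Finset.sum_mul, Finset.mul_sum]
      _ = _ := by rw [h2, one_mul]
  rw [Finset.sum_congr rfl fun a _ => key a, Finset.sum_add_distrib, ← Finset.sum_mul, h1,
    one_mul]

end basic

section tuples

variable {Ω : Type*} [Fintype Ω] {A : Type*} [Fintype A] [DecidableEq A]
  (p : Ω → ℝ) (hsum : ∑ ω, p ω = 1) (X : Fin 3 → Ω → A)
  (hindep : ∀ f : Fin 3 → A, rvDist p (fun ω i => X i ω) f = ∏ i, rvDist p (X i) (f i))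

include hindep in
lemma master (c : Fin 3 → Finset A) :
    ∑ ω, (if (∀ i, X i ω ∈ c i) then p ω else 0) = ∏ i, ∑ a ∈ c i, rvDist p (X i) a := by
  rw [Finset.prod_univ_sum]
  rw [Finset.sum_congr rfl fun f (_ : f ∈ Fintype.piFinset c) => (hindep f).symm]
  unfold rvDist
  rw [Finset.sum_comm]
  refine Finset.sum_congr rfl fun ω _ => ?_
  rw [Finset.sum_ite_eq]
  simp [Fintype.mem_piFinset]

include hsum hindep in
lemma dist_tup (R : Finset (Fin 3)) (g : R → A) :
    rvDist p (tup X R) g = ∏ i, (if h : i ∈ R then rvDist p (X i) (g ⟨i, h⟩) else 1) := by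
  have hmas := master p X hindep (fun i => if h : i ∈ R then {g ⟨i, h⟩} else Finset.univ)
  have hcond : ∀ ω, (tup X R ω = g) ↔
      (∀ i, X i ω ∈ (if h : i ∈ R then {g ⟨i, h⟩} else (Finset.univ : Finset A))) := by
    intro ω
    constructor
    · intro h i
      by_cases hi : i ∈ R
      · rw [dif_pos hi, Finset.mem_singleton]
        exact congrFun h ⟨i, hi⟩
      · rw [dif_neg hi]; exact Finset.mem_univ _
    · intro h
      funext j
      have := h j.1
      rw [dif_pos j.2, Finset.mem_singleton] at this
      exact this
  have hL : rvDist p (tup X R) g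
      = ∑ ω, (if (∀ i, X i ω ∈ (if h : i ∈ R then {g ⟨i, h⟩} else (Finset.univ : Finset A)))
          then p ω else 0) := by
    unfold rvDist
    exact Finset.sum_congr rfl fun ω _ => if_congr (hcond ω) rfl rfl
  rw [hL, hmas]
  refine Finset.prod_congr rfl fun i _ => ?_
  by_cases hi : i ∈ R
  · rw [dif_pos hi, dif_pos hi, Finset.sum_singleton]
  · rw [dif_neg hi, dif_neg hi, sum_rvDist, hsum]

include hsum hindep in
lemma dist_pair_tup (U V : Finset (Fin 3)) (hUV : Disjoint U V) (g : U → A) (h : V → A) :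
    rvDist p (fun ω => (tup X U ω, tup X V ω)) (g, h)
      = rvDist p (tup X U) g * rvDist p (tup X V) h := by
  rw [dist_tup p hsum X hindep U g, dist_tup p hsum X hindep V h, ← Finset.prod_mul_distrib]
  have hmas := master p X hindep
    (fun i => if hU : i ∈ U then {g ⟨i, hU⟩} else if hV : i ∈ V then {h ⟨i, hV⟩} else Finset.univ)
  have hcond : ∀ ω, ((fun ω => (tup X U ω, tup X V ω)) ω = (g, h)) ↔
      (∀ i, X i ω ∈ (if hU : i ∈ U then {g ⟨i, hU⟩} else if hV : i ∈ V then {h ⟨i, hV⟩}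
        else (Finset.univ : Finset A))) := by
    intro ω
    rw [Prod.mk.injEq]
    constructor
    · rintro ⟨h1, h2⟩ i
      by_cases hU : i ∈ U
      · rw [dif_pos hU, Finset.mem_singleton]; exact congrFun h1 ⟨i, hU⟩
      · rw [dif_neg hU]
        by_cases hV : i ∈ V
        · rw [dif_pos hV, Finset.mem_singleton]; exact congrFun h2 ⟨i, hV⟩
        · rw [dif_neg hV]; exact Finset.mem_univ _
    · intro hc
      constructor
      · funext j
        have := hc j.1
        rw [dif_pos j.2, Finset.mem_singleton] at this
        exact this
      · funext j
        have := hc j.1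
        rw [dif_neg (Finset.disjoint_right.mp hUV j.2), dif_pos j.2,
          Finset.mem_singleton] at this
        exact this
  have hL : rvDist p (fun ω => (tup X U ω, tup X V ω)) (g, h)
      = ∑ ω, (if (∀ i, X i ω ∈ (if hU : i ∈ U then {g ⟨i, hU⟩} else if hV : i ∈ V then {h ⟨i, hV⟩}
          else (Finset.univ : Finset A))) then p ω else 0) := by
    unfold rvDist
    exact Finset.sum_congr rfl fun ω _ => if_congr (hcond ω) rfl rfl
  rw [hL, hmas]
  refine Finset.prod_congr rfl fun i _ => ?_
  by_cases hU : i ∈ U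
  · rw [dif_pos hU, dif_pos hU, dif_neg (Finset.disjoint_left.mp hUV hU), mul_one,
      Finset.sum_singleton]
  · rw [dif_neg hU, dif_neg hU, one_mul]
    by_cases hV : i ∈ V
    · rw [dif_pos hV, dif_pos hV, Finset.sum_singleton]
    · rw [dif_neg hV, dif_neg hV, sum_rvDist, hsum]

include hsum hindep in
lemma ent_split (U V : Finset (Fin 3)) (hUV : Disjoint U V) :
    rvEnt p (tup X (U ∪ V)) = rvEnt p (tup X U) + rvEnt p (tup X V) := by
  have hφ : Function.Injective (fun q : ((U ∪ V : Finset (Fin 3)) → A) =>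
      ((fun i : U => q ⟨i.1, Finset.mem_union_left _ i.2⟩,
        fun i : V => q ⟨i.1, Finset.mem_union_right _ i.2⟩) : (U → A) × (V → A))) := by
    intro q1 q2 heq
    funext i
    rcases Finset.mem_union.mp i.2 with h | h
    · exact congrFun (congrArg Prod.fst heq) ⟨i.1, h⟩
    · exact congrFun (congrArg Prod.snd heq) ⟨i.1, h⟩
  have e1 := rvEnt_comp_inj p (tup X (U ∪ V)) _ hφ
  rw [← e1]
  exact rvEnt_pair_indep p hsum (tup X U) (tup X V)
    (fun g h => dist_pair_tup p hsum X hindep U V hUV g h)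

end tuples

lemma key_ineq (t u v m : ℝ) (ht : 0 ≤ t) (htu : t ≤ u) (htv : t ≤ v) (hum : u ≤ m)
    (hvm : v ≤ m) :
    t - u * v / m ≤ t * (Real.log t + Real.log m - Real.log u - Real.log v) := by
  rcases eq_or_lt_of_le ht with h0 | h0
  · have hu0 : 0 ≤ u := le_trans ht htu
    have hv0 : 0 ≤ v := le_trans ht htv
    have hm0 : 0 ≤ m := le_trans hu0 hum
    have : 0 ≤ u * v / m := div_nonneg (mul_nonneg hu0 hv0) hm0
    rw [← h0]
    simp
    linarith
  · have hu0 : 0 < u := lt_of_lt_of_le h0 htu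
    have hv0 : 0 < v := lt_of_lt_of_le h0 htv
    have hm0 : 0 < m := lt_of_lt_of_le hu0 hum
    have hlog := Real.log_le_sub_one_of_pos (show 0 < u * v / (t * m) by positivity)
    rw [Real.log_div (by positivity) (by positivity),
      Real.log_mul (ne_of_gt hu0) (ne_of_gt hv0),
      Real.log_mul (ne_of_gt h0) (ne_of_gt hm0)] at hlog
    have h2 : t * (1 - u * v / (t * m))
        ≤ t * (Real.log t + Real.log m - Real.log u - Real.log v) := by
      apply mul_le_mul_of_nonneg_left _ (le_of_lt h0)
      linarith
    have h3 : t * (1 - u * v / (t * m)) = t - u * v / m := by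
      field_simp
    linarith

section submod

variable {Ω A B C : Type*} [Fintype Ω] [Fintype A] [DecidableEq A] [Fintype B] [DecidableEq B]
  [Fintype C] [DecidableEq C] (p : Ω → ℝ)

lemma ent_submodular (hp : ∀ ω, 0 ≤ p ω) (hsum : ∑ ω, p ω = 1)
    (X : Ω → A) (Y : Ω → B) (W : Ω → C) :
    rvEnt p (fun ω => (X ω, Y ω, W ω)) + rvEnt p W
      ≤ rvEnt p (fun ω => (X ω, W ω)) + rvEnt p (fun ω => (Y ω, W ω)) := by
  -- marginal identities
  have hu : ∀ x w, ∑ y, rvDist p (fun ω => (X ω, Y ω, W ω)) (x, y, w)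
      = rvDist p (fun ω => (X ω, W ω)) (x, w) := by
    intro x w
    unfold rvDist
    rw [Finset.sum_comm]
    refine Finset.sum_congr rfl fun ω _ => ?_
    by_cases h1 : X ω = x <;> by_cases h2 : W ω = w <;> simp [Prod.ext_iff, h1, h2]
  have hv : ∀ y w, ∑ x, rvDist p (fun ω => (X ω, Y ω, W ω)) (x, y, w)
      = rvDist p (fun ω => (Y ω, W ω)) (y, w) := by
    intro y w
    unfold rvDist
    rw [Finset.sum_comm]
    refine Finset.sum_congr rfl fun ω _ => ?_
    by_cases h1 : Y ω = y <;> by_cases h2 : W ω = w <;> simp [Prod.ext_iff, h1, h2]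
  have huu : ∀ w, ∑ x, rvDist p (fun ω => (X ω, W ω)) (x, w) = rvDist p W w := by
    intro w
    unfold rvDist
    rw [Finset.sum_comm]
    refine Finset.sum_congr rfl fun ω _ => ?_
    by_cases h2 : W ω = w <;> simp [Prod.ext_iff, h2]
  have hvv : ∀ w, ∑ y, rvDist p (fun ω => (Y ω, W ω)) (y, w) = rvDist p W w := by
    intro w
    unfold rvDist
    rw [Finset.sum_comm]
    refine Finset.sum_congr rfl fun ω _ => ?_
    by_cases h2 : W ω = w <;> simp [Prod.ext_iff, h2]
  -- nonnegativity and domination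
  have htn : ∀ x y w, 0 ≤ rvDist p (fun ω => (X ω, Y ω, W ω)) (x, y, w) :=
    fun x y w => rvDist_nonneg p hp _ _
  have hun : ∀ x w, 0 ≤ rvDist p (fun ω => (X ω, W ω)) (x, w) :=
    fun x w => rvDist_nonneg p hp _ _
  have hvn : ∀ y w, 0 ≤ rvDist p (fun ω => (Y ω, W ω)) (y, w) :=
    fun y w => rvDist_nonneg p hp _ _
  have htu : ∀ x y w, rvDist p (fun ω => (X ω, Y ω, W ω)) (x, y, w)
      ≤ rvDist p (fun ω => (X ω, W ω)) (x, w) := fun x y w => by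
    rw [← hu x w]
    exact Finset.single_le_sum (fun y' _ => htn x y' w) (Finset.mem_univ y)
  have htv : ∀ x y w, rvDist p (fun ω => (X ω, Y ω, W ω)) (x, y, w)
      ≤ rvDist p (fun ω => (Y ω, W ω)) (y, w) := fun x y w => by
    rw [← hv y w]
    exact Finset.single_le_sum (fun x' _ => htn x' y w) (Finset.mem_univ x)
  have hum : ∀ x w, rvDist p (fun ω => (X ω, W ω)) (x, w) ≤ rvDist p W w := fun x w => by
    rw [← huu w]
    exact Finset.single_le_sum (fun x' _ => hun x' w) (Finset.mem_univ x)
  have hvm : ∀ y w, rvDist p (fun ω => (Y ω, W ω)) (y, w) ≤ rvDist p W w := fun y w => by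
    rw [← hvv w]
    exact Finset.single_le_sum (fun y' _ => hvn y' w) (Finset.mem_univ y)
  -- entropy expansions
  have neg_log : ∀ z : ℝ, z * Real.log z = - Real.negMulLog z := fun z => by
    simp [Real.negMulLog]
  have eT : rvEnt p (fun ω => (X ω, Y ω, W ω))
      = ∑ x, ∑ y, ∑ w, Real.negMulLog (rvDist p (fun ω => (X ω, Y ω, W ω)) (x, y, w)) := by
    unfold rvEnt
    rw [Fintype.sum_prod_type]
    exact Finset.sum_congr rfl fun x _ => by rw [Fintype.sum_prod_type]
  have eU : rvEnt p (fun ω => (X ω, W ω))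
      = ∑ x, ∑ w, Real.negMulLog (rvDist p (fun ω => (X ω, W ω)) (x, w)) := by
    unfold rvEnt
    rw [Fintype.sum_prod_type]
  have eV : rvEnt p (fun ω => (Y ω, W ω))
      = ∑ y, ∑ w, Real.negMulLog (rvDist p (fun ω => (Y ω, W ω)) (y, w)) := by
    unfold rvEnt
    rw [Fintype.sum_prod_type]
  -- log-sum identities
  have Iu : ∑ x, ∑ y, ∑ w, rvDist p (fun ω => (X ω, Y ω, W ω)) (x, y, w)
        * Real.log (rvDist p (fun ω => (X ω, W ω)) (x, w))
      = - rvEnt p (fun ω => (X ω, W ω)) := by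
    rw [eU]
    rw [← Finset.sum_neg_distrib]
    refine Finset.sum_congr rfl fun x _ => ?_
    rw [Finset.sum_comm, ← Finset.sum_neg_distrib]
    refine Finset.sum_congr rfl fun w _ => ?_
    rw [← Finset.sum_mul, hu, neg_log]
  have Iv : ∑ x, ∑ y, ∑ w, rvDist p (fun ω => (X ω, Y ω, W ω)) (x, y, w)
        * Real.log (rvDist p (fun ω => (Y ω, W ω)) (y, w))
      = - rvEnt p (fun ω => (Y ω, W ω)) := by
    rw [eV, Finset.sum_comm, ← Finset.sum_neg_distrib]
    refine Finset.sum_congr rfl fun y _ => ?_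
    rw [Finset.sum_comm, ← Finset.sum_neg_distrib]
    refine Finset.sum_congr rfl fun w _ => ?_
    rw [← Finset.sum_mul, hv, neg_log]
  have Im : ∑ x, ∑ y, ∑ w, rvDist p (fun ω => (X ω, Y ω, W ω)) (x, y, w)
        * Real.log (rvDist p W w)
      = - rvEnt p W := by
    have s1 : ∀ x, ∑ y, ∑ w, rvDist p (fun ω => (X ω, Y ω, W ω)) (x, y, w)
        * Real.log (rvDist p W w)
        = ∑ w, rvDist p (fun ω => (X ω, W ω)) (x, w) * Real.log (rvDist p W w) := by
      intro x
      rw [Finset.sum_comm]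
      refine Finset.sum_congr rfl fun w _ => ?_
      rw [← Finset.sum_mul, hu]
    rw [Finset.sum_congr rfl fun x _ => s1 x, Finset.sum_comm]
    unfold rvEnt
    rw [← Finset.sum_neg_distrib]
    refine Finset.sum_congr rfl fun w _ => ?_
    rw [← Finset.sum_mul, huu, neg_log]
  have It : ∑ x, ∑ y, ∑ w, rvDist p (fun ω => (X ω, Y ω, W ω)) (x, y, w)
        * Real.log (rvDist p (fun ω => (X ω, Y ω, W ω)) (x, y, w))
      = - rvEnt p (fun ω => (X ω, Y ω, W ω)) := by
    rw [eT, ← Finset.sum_neg_distrib]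
    refine Finset.sum_congr rfl fun x _ => ?_
    rw [← Finset.sum_neg_distrib]
    refine Finset.sum_congr rfl fun y _ => ?_
    rw [← Finset.sum_neg_distrib]
    exact Finset.sum_congr rfl fun w _ => by rw [neg_log]
  -- the difference sum is zero
  have per_w : ∀ w, ∑ x, ∑ y, (rvDist p (fun ω => (X ω, Y ω, W ω)) (x, y, w)
      - rvDist p (fun ω => (X ω, W ω)) (x, w) * rvDist p (fun ω => (Y ω, W ω)) (y, w)
        / rvDist p W w) = 0 := by
    intro w
    by_cases hmw : rvDist p W w = 0
    · refine Finset.sum_eq_zero fun x _ => Finset.sum_eq_zero fun y _ => ?_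
      have hux : rvDist p (fun ω => (X ω, W ω)) (x, w) = 0 :=
        le_antisymm (hmw ▸ hum x w) (hun x w)
      have htx : rvDist p (fun ω => (X ω, Y ω, W ω)) (x, y, w) = 0 :=
        le_antisymm (hux ▸ htu x y w) (htn x y w)
      rw [htx, hux]
      simp
    · refine Finset.sum_eq_zero fun x _ => ?_
      rw [Finset.sum_sub_distrib, hu x w]
      have : ∑ y, rvDist p (fun ω => (X ω, W ω)) (x, w)
            * rvDist p (fun ω => (Y ω, W ω)) (y, w) / rvDist p W w
          = rvDist p (fun ω => (X ω, W ω)) (x, w) := by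
        rw [← Finset.sum_div, ← Finset.mul_sum, hvv w, mul_div_assoc, div_self hmw, mul_one]
      rw [this, sub_self]
  have hG : ∑ x, ∑ y, ∑ w, (rvDist p (fun ω => (X ω, Y ω, W ω)) (x, y, w)
      - rvDist p (fun ω => (X ω, W ω)) (x, w) * rvDist p (fun ω => (Y ω, W ω)) (y, w)
        / rvDist p W w) = 0 := by
    have step : ∀ x, ∑ y, ∑ w, (rvDist p (fun ω => (X ω, Y ω, W ω)) (x, y, w)
        - rvDist p (fun ω => (X ω, W ω)) (x, w) * rvDist p (fun ω => (Y ω, W ω)) (y, w)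
          / rvDist p W w)
        = ∑ w, ∑ y, (rvDist p (fun ω => (X ω, Y ω, W ω)) (x, y, w)
        - rvDist p (fun ω => (X ω, W ω)) (x, w) * rvDist p (fun ω => (Y ω, W ω)) (y, w)
          / rvDist p W w) := fun x => Finset.sum_comm
    rw [Finset.sum_congr rfl fun x _ => step x, Finset.sum_comm]
    refine Finset.sum_eq_zero fun w _ => ?_
    exact per_w w
  -- lower bound by key inequality
  have hlb : ∑ x, ∑ y, ∑ w, (rvDist p (fun ω => (X ω, Y ω, W ω)) (x, y, w)
      - rvDist p (fun ω => (X ω, W ω)) (x, w) * rvDist p (fun ω => (Y ω, W ω)) (y, w)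
        / rvDist p W w)
      ≤ ∑ x, ∑ y, ∑ w, (rvDist p (fun ω => (X ω, Y ω, W ω)) (x, y, w)
        * (Real.log (rvDist p (fun ω => (X ω, Y ω, W ω)) (x, y, w))
          + Real.log (rvDist p W w)
          - Real.log (rvDist p (fun ω => (X ω, W ω)) (x, w))
          - Real.log (rvDist p (fun ω => (Y ω, W ω)) (y, w)))) := by
    refine Finset.sum_le_sum fun x _ => Finset.sum_le_sum fun y _ =>
      Finset.sum_le_sum fun w _ => ?_
    exact key_ineq _ _ _ _ (htn x y w) (htu x y w) (htv x y w) (hum x w) (hvm y w)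
  -- expand the right-hand side of hlb
  have hexp : ∑ x, ∑ y, ∑ w, (rvDist p (fun ω => (X ω, Y ω, W ω)) (x, y, w)
        * (Real.log (rvDist p (fun ω => (X ω, Y ω, W ω)) (x, y, w))
          + Real.log (rvDist p W w)
          - Real.log (rvDist p (fun ω => (X ω, W ω)) (x, w))
          - Real.log (rvDist p (fun ω => (Y ω, W ω)) (y, w))))
      = rvEnt p (fun ω => (X ω, W ω)) + rvEnt p (fun ω => (Y ω, W ω))
        - rvEnt p (fun ω => (X ω, Y ω, W ω)) - rvEnt p W := by
    have expand : ∑ x, ∑ y, ∑ w, (rvDist p (fun ω => (X ω, Y ω, W ω)) (x, y, w)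
        * (Real.log (rvDist p (fun ω => (X ω, Y ω, W ω)) (x, y, w))
          + Real.log (rvDist p W w)
          - Real.log (rvDist p (fun ω => (X ω, W ω)) (x, w))
          - Real.log (rvDist p (fun ω => (Y ω, W ω)) (y, w))))
        = (∑ x, ∑ y, ∑ w, rvDist p (fun ω => (X ω, Y ω, W ω)) (x, y, w)
            * Real.log (rvDist p (fun ω => (X ω, Y ω, W ω)) (x, y, w)))
          + (∑ x, ∑ y, ∑ w, rvDist p (fun ω => (X ω, Y ω, W ω)) (x, y, w)
            * Real.log (rvDist p W w))
          - (∑ x, ∑ y, ∑ w, rvDist p (fun ω => (X ω, Y ω, W ω)) (x, y, w)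
            * Real.log (rvDist p (fun ω => (X ω, W ω)) (x, w)))
          - (∑ x, ∑ y, ∑ w, rvDist p (fun ω => (X ω, Y ω, W ω)) (x, y, w)
            * Real.log (rvDist p (fun ω => (Y ω, W ω)) (y, w))) := by
      simp only [mul_add, mul_sub, Finset.sum_add_distrib, Finset.sum_sub_distrib]
    rw [expand, It, Im, Iu, Iv]
    ring
  rw [hG] at hlb
  rw [hexp] at hlb
  linarith

end submod

theorem stmt14 {Ω A C : Type*} [Fintype Ω] [Fintype A] [DecidableEq A]
    [Fintype C] [DecidableEq C]
    (p : Ω → ℝ) (hp : ∀ ω, 0 ≤ p ω) (hsum : ∑ ω, p ω = 1)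
    (X : Fin 3 → Ω → A) (Z : Ω → C)
    (hindep : ∀ f : Fin 3 → A, rvDist p (fun ω i => X i ω) f = ∏ i, rvDist p (X i) (f i)) :
    ∀ S T : Finset (Fin 3),
      rvMI p (tup X S) Z + rvMI p (tup X T) Z
        ≤ rvMI p (tup X (S ∪ T)) Z + rvMI p (tup X (S ∩ T)) Z := by
  intro S T
  -- submodularity of joint entropy applied to (X_S, X_T, (X_{S∩T}, Z))
  have hsub := ent_submodular p hp hsum (tup X S) (tup X T)
      (fun ω => (tup X (S ∩ T) ω, Z ω))
  -- identify the entropies appearing in hsub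
  have E3 : rvEnt p (fun ω => (tup X S ω, tup X T ω, tup X (S ∩ T) ω, Z ω))
      = rvEnt p (fun ω => (tup X (S ∪ T) ω, Z ω)) := by
    have hinj : Function.Injective (fun q : ((S ∪ T : Finset (Fin 3)) → A) × C =>
        (((fun i : S => q.1 ⟨i.1, Finset.mem_union_left _ i.2⟩) : S → A),
         ((fun i : T => q.1 ⟨i.1, Finset.mem_union_right _ i.2⟩ : T → A),
          ((fun i : (S ∩ T : Finset (Fin 3)) =>
            q.1 ⟨i.1, Finset.mem_union_left _ (Finset.mem_of_mem_inter_left i.2)⟩), q.2)))) := by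
      rintro ⟨f1, z1⟩ ⟨f2, z2⟩ h
      simp only [Prod.mk.injEq] at h
      obtain ⟨h1, h2, _, h4⟩ := h
      simp only [Prod.mk.injEq]
      refine ⟨?_, h4⟩
      funext i
      rcases Finset.mem_union.mp i.2 with hi | hi
      · exact congrFun h1 ⟨i.1, hi⟩
      · exact congrFun h2 ⟨i.1, hi⟩
    exact rvEnt_comp_inj' p (fun ω => (tup X (S ∪ T) ω, Z ω)) _ hinj _ (fun ω => rfl)
  have E1 : rvEnt p (fun ω => (tup X S ω, tup X (S ∩ T) ω, Z ω))
      = rvEnt p (fun ω => (tup X S ω, Z ω)) := by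
    have hinj : Function.Injective (fun q : (S → A) × C =>
        ((q.1 : S → A),
         ((fun i : (S ∩ T : Finset (Fin 3)) =>
            q.1 ⟨i.1, Finset.mem_of_mem_inter_left i.2⟩), q.2))) := by
      rintro ⟨f1, z1⟩ ⟨f2, z2⟩ h
      simp only [Prod.mk.injEq] at h
      exact Prod.ext h.1 h.2.2
    exact rvEnt_comp_inj' p (fun ω => (tup X S ω, Z ω)) _ hinj _ (fun ω => rfl)
  have E2 : rvEnt p (fun ω => (tup X T ω, tup X (S ∩ T) ω, Z ω))
      = rvEnt p (fun ω => (tup X T ω, Z ω)) := by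
    have hinj : Function.Injective (fun q : (T → A) × C =>
        ((q.1 : T → A),
         ((fun i : (S ∩ T : Finset (Fin 3)) =>
            q.1 ⟨i.1, Finset.mem_of_mem_inter_right i.2⟩), q.2))) := by
      rintro ⟨f1, z1⟩ ⟨f2, z2⟩ h
      simp only [Prod.mk.injEq] at h
      exact Prod.ext h.1 h.2.2
    exact rvEnt_comp_inj' p (fun ω => (tup X T ω, Z ω)) _ hinj _ (fun ω => rfl)
  rw [E3, E1, E2] at hsub
  -- additivity of marginal entropies for independent tuples
  have M1 : rvEnt p (tup X (S ∪ T)) = rvEnt p (tup X (S \ T)) + rvEnt p (tup X T) := by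
    have h := ent_split p hsum X hindep (S \ T) T Finset.sdiff_disjoint
    rwa [Finset.sdiff_union_self_eq_union] at h
  have M2 : rvEnt p (tup X S) = rvEnt p (tup X (S \ T)) + rvEnt p (tup X (S ∩ T)) := by
    have h := ent_split p hsum X hindep (S \ T) (S ∩ T)
      (Finset.disjoint_of_subset_right Finset.inter_subset_right Finset.sdiff_disjoint)
    rwa [Finset.sdiff_union_inter] at h
  simp only [rvMI]
  linarith
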